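/- If B is an invertible matrix jointly diagonalizing two SPD matrices C₁ and C₂, i.e., B C₁ Bᵀ = D₁ and B C₂ Bᵀ = D₂ with D₁, D₂ diagonal, and A = B^{-1}, then the geometric mean is C₁ # C₂ = A (D₁ D₂)^{1/2} Aᵀ. -/

import Mathlib

open Matrix

/-- Spectral function of a real matrix: applies `f` to the eigenvalues when the
matrix is symmetric (Hermitian); junk value (the matrix itself) otherwise. -/
noncomputable def mfun {N : ℕ} (f : ℝ → ℝ) (A : Matrix (Fin N) (Fin N) ℝ) :
    Matrix (Fin N) (Fin N) ℝ :=
  if h : A.IsHermitian then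
    (h.eigenvectorUnitary : Matrix (Fin N) (Fin N) ℝ) *
      Matrix.diagonal (fun i => f (h.eigenvalues i)) *
      (star h.eigenvectorUnitary : Matrix (Fin N) (Fin N) ℝ)
  else A

/-- The (unique SPD) square root of an SPD matrix, defined spectrally. -/
noncomputable def sqrtm {N : ℕ} (A : Matrix (Fin N) (Fin N) ℝ) := mfun Real.sqrt A

/-- The logarithm of an SPD matrix, defined spectrally. -/
noncomputable def logm {N : ℕ} (A : Matrix (Fin N) (Fin N) ℝ) := mfun Real.log A

/-- The exponential of a symmetric matrix, defined spectrally. -/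
noncomputable def expm {N : ℕ} (A : Matrix (Fin N) (Fin N) ℝ) := mfun Real.exp A

/-- Real power of an SPD matrix, defined spectrally. -/
noncomputable def powm {N : ℕ} (A : Matrix (Fin N) (Fin N) ℝ) (b : ℝ) :=
  mfun (fun x => x ^ b) A

/-- The geometric mean `C₁ # C₂ = C₁^{1/2} (C₁^{-1/2} C₂ C₁^{-1/2})^{1/2} C₁^{1/2}`. -/
noncomputable def geomMean {N : ℕ} (C₁ C₂ : Matrix (Fin N) (Fin N) ℝ) :=
  sqrtm C₁ * sqrtm ((sqrtm C₁)⁻¹ * C₂ * (sqrtm C₁)⁻¹) * sqrtm C₁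

/-- Frobenius norm of a real matrix. -/
noncomputable def frobNorm {N : ℕ} (A : Matrix (Fin N) (Fin N) ℝ) : ℝ :=
  Real.sqrt (∑ i, ∑ j, (A i j) ^ 2)

/-- The Fisher information Riemannian distance
`δ_R(C₁, C₂) = ‖ln (C₁^{-1/2} C₂ C₁^{-1/2})‖_F`. -/
noncomputable def distR {N : ℕ} (C₁ C₂ : Matrix (Fin N) (Fin N) ℝ) : ℝ :=
  frobNorm (logm ((sqrtm C₁)⁻¹ * C₂ * (sqrtm C₁)⁻¹))

/-- The geodesic `γ_β(Ω → Φ) = Ω^{1/2} (Ω^{-1/2} Φ Ω^{-1/2})^β Ω^{1/2}`. -/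
noncomputable def geodesic {N : ℕ} (Ω Φ : Matrix (Fin N) (Fin N) ℝ) (b : ℝ) :=
  sqrtm Ω * powm ((sqrtm Ω)⁻¹ * Φ * (sqrtm Ω)⁻¹) b * sqrtm Ω

/-!
`C₁ # C₂` is the positive semidefinite solution `X` of the Riccati equation `X C₁⁻¹ X = C₂`:
for `Y = C₁^{-1/2} X C₁^{-1/2}` the equation says `Y² = C₁^{-1/2} C₂ C₁^{-1/2}`, and a positive
semidefinite square root is unique. The Riccati equation is preserved by the congruence
`C ↦ A C Aᵀ`, and for diagonal `D₁ = B C₁ Bᵀ`, `D₂ = B C₂ Bᵀ` its solution is `(D₁ D₂)^{1/2}`.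
-/

open scoped MatrixOrder

section congruence

variable {n R : Type*} [Fintype n] [DecidableEq n] [CommRing R]

theorem inv_mul_congr_mul_inv_transpose {B : Matrix n n R} (hB : IsUnit B) (C : Matrix n n R) :
    B⁻¹ * (B * C * Bᵀ) * B⁻¹ᵀ = C := by
  have hB_det : IsUnit B.det := (isUnit_iff_isUnit_det B).mp hB
  have hBT_det : IsUnit Bᵀ.det := by rwa [det_transpose]
  calc B⁻¹ * (B * C * Bᵀ) * B⁻¹ᵀ = (B⁻¹ * B) * C * (Bᵀ * Bᵀ⁻¹) := by
        simp only [transpose_nonsing_inv, Matrix.mul_assoc]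
    _ = C := by rw [nonsing_inv_mul _ hB_det, mul_nonsing_inv _ hBT_det, one_mul, mul_one]

theorem mul_inv_mul_congr_transpose {A X D E : Matrix n n R} (hA : IsUnit A)
    (h : X * D⁻¹ * X = E) :
    (A * X * Aᵀ) * (A * D * Aᵀ)⁻¹ * (A * X * Aᵀ) = A * E * Aᵀ := by
  have hA_det : IsUnit A.det := (isUnit_iff_isUnit_det A).mp hA
  have hAT_det : IsUnit Aᵀ.det := by rwa [det_transpose]
  calc (A * X * Aᵀ) * (A * D * Aᵀ)⁻¹ * (A * X * Aᵀ)
      = A * X * (Aᵀ * Aᵀ⁻¹) * D⁻¹ * (A⁻¹ * A) * X * Aᵀ := by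
        simp only [Matrix.mul_inv_rev]; noncomm_ring
    _ = A * E * Aᵀ := by
        rw [mul_nonsing_inv _ hAT_det, nonsing_inv_mul _ hA_det, ← h]; noncomm_ring

end congruence

section diagonal

variable {n : Type*} [Fintype n] [DecidableEq n]

theorem pos_of_mul_mul_transpose_eq_diagonal {B C : Matrix n n ℝ} {d : n → ℝ} (hB : IsUnit B)
    (hC : C.PosDef) (hD : B * C * Bᵀ = diagonal d) (i : n) : 0 < d i := by
  revert i
  rw [← posDef_diagonal_iff, ← hD]
  exact (IsUnit.posDef_star_right_conjugate_iff hB).mpr hC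

theorem diagonal_sqrt_mul_inv_mul {d₁ d₂ : n → ℝ} (hd₁ : ∀ i, 0 < d₁ i) (hd₂ : ∀ i, 0 ≤ d₂ i) :
    diagonal (fun i => √(d₁ i * d₂ i)) * (diagonal d₁)⁻¹ * diagonal (fun i => √(d₁ i * d₂ i)) =
      diagonal d₂ := by
  have hinv : (diagonal d₁)⁻¹ = diagonal d₁⁻¹ := inv_eq_left_inv <| by
    rw [diagonal_mul_diagonal, ← diagonal_one]
    congr 1
    funext i
    exact inv_mul_cancel₀ (hd₁ i).ne'
  rw [hinv, diagonal_mul_diagonal, diagonal_mul_diagonal]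
  congr 1
  funext i
  rw [Pi.inv_apply, mul_right_comm, Real.mul_self_sqrt (mul_nonneg (hd₁ i).le (hd₂ i))]
  field_simp [(hd₁ i).ne']

end diagonal

section geomMean

variable {N : ℕ}

theorem sqrtm_eq_sqrt_of_posSemidef {M : Matrix (Fin N) (Fin N) ℝ} (hM : M.PosSemidef) :
    sqrtm M = CFC.sqrt M := by
  rw [sqrtm, mfun, dif_pos hM.1, CFC.sqrt_eq_cfc, cfc_nnreal_eq_real _ M hM.nonneg, hM.1.cfc_eq,
    IsHermitian.cfc]
  simp only [Unitary.conjStarAlgAut_apply, Function.comp_def]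
  congr 3
  funext i
  simp [Real.coe_sqrt, Real.coe_toNNReal', max_eq_left (hM.eigenvalues_nonneg i)]

theorem geomMean_eq_of_mul_inv_mul_eq {C₁ C₂ X : Matrix (Fin N) (Fin N) ℝ} (h₁ : C₁.PosDef)
    (hX : X.PosSemidef) (hXC : X * C₁⁻¹ * X = C₂) : geomMean C₁ C₂ = X := by
  set S := sqrtm C₁
  have hS_eq : S = CFC.sqrt C₁ := sqrtm_eq_sqrt_of_posSemidef h₁.posSemidef
  have hSS : S * S = C₁ := hS_eq ▸ CFC.sqrt_mul_sqrt_self C₁ h₁.posSemidef.nonneg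
  have hS_psd : S.PosSemidef := hS_eq ▸ (CFC.sqrt_nonneg C₁).posSemidef
  have hS_det : IsUnit S.det :=
    (isUnit_iff_isUnit_det S).mp (isUnit_of_mul_isUnit_left (hSS ▸ h₁.isUnit))
  have hSinv_herm : (S⁻¹)ᴴ = S⁻¹ := by rw [conjTranspose_nonsing_inv, hS_psd.1.eq]
  set Y := S⁻¹ * X * S⁻¹
  have hY_psd : Y.PosSemidef := by
    simpa only [hSinv_herm] using hX.mul_mul_conjTranspose_same S⁻¹
  have hYY : Y * Y = S⁻¹ * C₂ * S⁻¹ := by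
    rw [← hXC, ← hSS, Matrix.mul_inv_rev]
    simp only [Y, Matrix.mul_assoc]
  have hYY_psd : (Y * Y).PosSemidef := by
    simpa only [hY_psd.1.eq] using posSemidef_conjTranspose_mul_self Y
  calc geomMean C₁ C₂ = S * sqrtm (Y * Y) * S := by rw [geomMean, hYY]
    _ = S * Y * S := by rw [sqrtm_eq_sqrt_of_posSemidef hYY_psd, CFC.sqrt_mul_self Y hY_psd.nonneg]
    _ = (S * S⁻¹) * X * (S⁻¹ * S) := by simp only [Y, Matrix.mul_assoc]
    _ = X := by rw [mul_nonsing_inv S hS_det, nonsing_inv_mul S hS_det, one_mul, mul_one]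

end geomMean

/-- if `B` jointly diagonalizes `C₁, C₂` (`B Cᵢ Bᵀ = Dᵢ` diagonal) and
`A = B⁻¹`, then `C₁ # C₂ = A (D₁ D₂)^{1/2} Aᵀ` with the entrywise diagonal square root. -/
theorem stmt8 {N : ℕ} (C₁ C₂ B A : Matrix (Fin N) (Fin N) ℝ) (d₁ d₂ : Fin N → ℝ)
    (h₁ : C₁.PosDef) (h₂ : C₂.PosDef) (hB : IsUnit B) (hA : A = B⁻¹)
    (hD₁ : B * C₁ * Bᵀ = Matrix.diagonal d₁) (hD₂ : B * C₂ * Bᵀ = Matrix.diagonal d₂) :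
    geomMean C₁ C₂ = A * Matrix.diagonal (fun i => Real.sqrt (d₁ i * d₂ i)) * Aᵀ := by
  subst hA
  have hd₁ : ∀ i, 0 < d₁ i := pos_of_mul_mul_transpose_eq_diagonal hB h₁ hD₁
  have hd₂ : ∀ i, 0 < d₂ i := pos_of_mul_mul_transpose_eq_diagonal hB h₂ hD₂
  have hC₁ : C₁ = B⁻¹ * diagonal d₁ * B⁻¹ᵀ := by rw [← hD₁, inv_mul_congr_mul_inv_transpose hB]
  have hC₂ : C₂ = B⁻¹ * diagonal d₂ * B⁻¹ᵀ := by rw [← hD₂, inv_mul_congr_mul_inv_transpose hB]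
  have hG : (diagonal fun i => √(d₁ i * d₂ i)).PosSemidef :=
    posSemidef_diagonal_iff.mpr fun i => Real.sqrt_nonneg _
  refine geomMean_eq_of_mul_inv_mul_eq h₁ ?_ ?_
  · simpa only [conjTranspose_eq_transpose_of_trivial] using hG.mul_mul_conjTranspose_same B⁻¹
  · rw [hC₁, hC₂]
    exact mul_inv_mul_congr_transpose (isUnit_nonsing_inv_iff.mpr hB)
      (diagonal_sqrt_mul_inv_mul hd₁ fun i => (hd₂ i).le)
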